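/- Let Ω be a convex domain in ℝ^d with C¹ boundary containing the origin in its interior. Suppose μ ∈ [0,1] and sup_{t>0} t^{−(d−1−μ)} |E(t)| ≤ C₁. Then there is a constant C (depending on Ω and C₁) such that for all t ≥ 1 and 0 < ε ≤ 1, |E_ε(t)| ≤ C max{ t^{d−1−μ}, t^{d−1} ε }. -/

import Mathlib

open MeasureTheory Real Pointwise

/-- Number of integer lattice points in the dilate `t • Ω`. -/
noncomputable def latticeCount {d : ℕ} (Ω : Set (EuclideanSpace ℝ (Fin d))) (t : ℝ) : ℝ :=
  ((t • Ω) ∩ {x : EuclideanSpace ℝ (Fin d) | ∀ i, ∃ m : ℤ, x i = (m : ℝ)}).ncard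

/-- The lattice remainder `E(t) = N(t) - t^d vol(Ω)`. -/
noncomputable def latticeErr {d : ℕ} (Ω : Set (EuclideanSpace ℝ (Fin d))) (t : ℝ) : ℝ :=
  latticeCount Ω t - t ^ d * (volume Ω).toReal

/-- A lattice point `k ∈ ℤ^d` regarded as a vector of `ℝ^d`. -/
noncomputable def intVec {d : ℕ} (k : Fin d → ℤ) : EuclideanSpace ℝ (Fin d) :=
  WithLp.toLp 2 (fun i => (k i : ℝ))

/-- The mollified counting function `N_ε(t) = Σ_{k ∈ ℤ^d} (χ_{tΩ} * ζ_ε)(k)`,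
where `ζ_ε(x) = ε^{-d} ζ(x/ε)`. -/
noncomputable def mollifiedCount {d : ℕ} (Ω : Set (EuclideanSpace ℝ (Fin d)))
    (ζ : EuclideanSpace ℝ (Fin d) → ℝ) (ε t : ℝ) : ℝ :=
  ∑' k : Fin d → ℤ, ∫ y : EuclideanSpace ℝ (Fin d),
    Set.indicator (t • Ω) (fun _ => (1 : ℝ)) (intVec k - y) *
      ((ε ^ d)⁻¹ * ζ (ε⁻¹ • y))

/-- The mollified remainder `E_ε(t) = N_ε(t) - t^d vol(Ω)`. -/
noncomputable def mollifiedErr {d : ℕ} (Ω : Set (EuclideanSpace ℝ (Fin d)))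
    (ζ : EuclideanSpace ℝ (Fin d) → ℝ) (ε t : ℝ) : ℝ :=
  mollifiedCount Ω ζ ε t - t ^ d * (volume Ω).toReal

/-- `Ω` has `C¹` boundary. -/
def C1Boundary {d : ℕ} (Ω : Set (EuclideanSpace ℝ (Fin d))) : Prop :=
  ∃ F : EuclideanSpace ℝ (Fin d) → ℝ, ContDiff ℝ 1 F ∧ Ω = {x | F x < 0} ∧
    (∀ x ∈ frontier Ω, fderiv ℝ F x ≠ 0)

/-!
Since `Ω` is convex and contains `B(0, 2δ₀)`, translating a point of `tΩ` by a vector of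
length `< εδ₀` lands in `(t + ε/2)Ω`, and every such translate of a point of `(t - ε/2)Ω`
lies in `tΩ`. As `ζ_ε` is a probability density supported in `B(0, εδ₀)`, each term
`(χ_{tΩ} * ζ_ε)(k)` lies between the indicators of `(t - ε/2)Ω` and `(t + ε/2)Ω` at `k`, so
`N(t - ε/2) ≤ N_ε(t) ≤ N(t + ε/2)`. The hypothesis bounds `E(t ± ε/2)` by a multiple of
`t^{d-1-μ}`, and the volume terms differ from `t^d vol(Ω)` by `O(t^{d-1} ε)`.
-/

open Metric Set

section LatticePoints

variable {d : ℕ}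

lemma norm_le_norm_intVec (k : Fin d → ℤ) : ‖k‖ ≤ ‖intVec k‖ := by
  refine (pi_norm_le_iff_of_nonneg (norm_nonneg _)).2 fun i => ?_
  calc ‖k i‖ = ‖intVec k i‖ := by simp [intVec, Int.norm_eq_abs]
    _ ≤ ‖intVec k‖ := PiLp.norm_apply_le _ i

lemma finite_setOf_intVec_mem {B : Set (EuclideanSpace ℝ (Fin d))}
    (hB : Bornology.IsBounded B) : {k : Fin d → ℤ | intVec k ∈ B}.Finite := by
  obtain ⟨R, hR⟩ := hB.subset_closedBall 0
  refine (isCompact_closedBall (0 : Fin d → ℤ) R).finite_of_discrete.subset fun k hk => ?_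
  have := hR hk
  rw [mem_closedBall_zero_iff] at this ⊢
  exact (norm_le_norm_intVec k).trans this

lemma summable_indicator_intVec {B : Set (EuclideanSpace ℝ (Fin d))}
    (hB : Bornology.IsBounded B) :
    Summable fun k : Fin d → ℤ => B.indicator (fun _ => (1 : ℝ)) (intVec k) :=
  summable_of_ne_finset_zero (s := (finite_setOf_intVec_mem hB).toFinset) fun k hk => by
    simp_all

lemma range_intVec :
    range (@intVec d) = {x : EuclideanSpace ℝ (Fin d) | ∀ i, ∃ m : ℤ, x i = (m : ℝ)} := by
  ext x
  refine ⟨?_, fun hx => ?_⟩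
  · rintro ⟨k, rfl⟩ i
    exact ⟨k i, rfl⟩
  · choose m hm using hx
    exact ⟨m, by ext i; simp [intVec, hm]⟩

lemma intVec_injective : Function.Injective (@intVec d) := fun k k' h => by
  funext i
  simpa [intVec] using congrFun (congrArg WithLp.ofLp h) i

lemma latticeCount_eq_tsum_indicator (Ω : Set (EuclideanSpace ℝ (Fin d))) (s : ℝ) :
    latticeCount Ω s =
      ∑' k : Fin d → ℤ, (s • Ω).indicator (fun _ => (1 : ℝ)) (intVec k) := by
  have hind : ∀ k, (s • Ω).indicator (fun _ => (1 : ℝ)) (intVec k) =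
      (intVec ⁻¹' (s • Ω)).indicator (fun _ => 1) k := fun k => rfl
  rw [latticeCount, ← range_intVec, ← image_preimage_eq_inter_range,
    ncard_image_of_injective _ intVec_injective]
  simp_rw [hind]
  rw [← tsum_subtype, tsum_const, Nat.card_coe_set_eq, nsmul_one]

end LatticePoints

section Averaging

variable {α : Type*} [MeasurableSpace α] [Sub α] {μ : Measure α} {w : α → ℝ}
  {S T : Set α} {x : α}

lemma integral_indicator_sub_mul_le_indicator (hw0 : 0 ≤ w) (hw1 : ∫ y, w y ∂μ = 1)
    (hST : ∀ y, w y ≠ 0 → x - y ∈ S → x ∈ T) :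
    ∫ y, S.indicator (fun _ => (1 : ℝ)) (x - y) * w y ∂μ ≤ T.indicator (fun _ => 1) x := by
  by_cases hx : x ∈ T
  · rw [indicator_of_mem hx]
    refine (integral_mono_of_nonneg (ae_of_all _ fun y => ?_)
      (Integrable.of_integral_ne_zero (by simp [hw1])) (ae_of_all _ fun y => ?_)).trans_eq hw1
    · exact mul_nonneg (indicator_nonneg (fun _ _ => zero_le_one) _) (hw0 y)
    · refine mul_le_of_le_one_left (hw0 y) ?_
      exact indicator_apply_le' (fun _ => le_rfl) fun _ => zero_le_one
  · rw [indicator_of_notMem hx]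
    refine (integral_eq_zero_of_ae (ae_of_all _ fun y => ?_)).le
    by_cases hy : w y = 0
    · simp [hy]
    · simp [indicator_of_notMem fun h => hx (hST y hy h)]

lemma indicator_le_integral_indicator_sub_mul (hw0 : 0 ≤ w) (hw1 : ∫ y, w y ∂μ = 1)
    (hTS : ∀ y, w y ≠ 0 → x ∈ T → x - y ∈ S) :
    T.indicator (fun _ => 1) x ≤ ∫ y, S.indicator (fun _ => (1 : ℝ)) (x - y) * w y ∂μ := by
  by_cases hx : x ∈ T
  · rw [indicator_of_mem hx]
    refine hw1.symm.trans_le (integral_congr_ae (ae_of_all _ fun y => ?_)).ge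
    by_cases hy : w y = 0
    · simp [hy]
    · simp [indicator_of_mem (hTS y hy hx)]
  · rw [indicator_of_notMem hx]
    exact integral_nonneg fun y => mul_nonneg (indicator_nonneg (fun _ _ => zero_le_one) _) (hw0 y)

end Averaging

section RescaledBump

variable {d : ℕ} {ζ : EuclideanSpace ℝ (Fin d) → ℝ} {ε : ℝ}

structure IsNormalizedBump (ζ : EuclideanSpace ℝ (Fin d) → ℝ) (δ : ℝ) : Prop where
  nonneg : ∀ x, 0 ≤ ζ x
  support_subset : Function.support ζ ⊆ ball 0 δ
  integral_eq_one : ∫ x, ζ x = 1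

noncomputable def rescaledBump (ζ : EuclideanSpace ℝ (Fin d) → ℝ) (ε : ℝ)
    (y : EuclideanSpace ℝ (Fin d)) : ℝ :=
  (ε ^ d)⁻¹ * ζ (ε⁻¹ • y)

lemma rescaledBump_nonneg (hζ : ∀ x, 0 ≤ ζ x) (hε : 0 ≤ ε) : 0 ≤ rescaledBump ζ ε :=
  fun y => mul_nonneg (by positivity) (hζ _)

lemma integral_rescaledBump (hε : 0 < ε) : ∫ y, rescaledBump ζ ε y = ∫ x, ζ x := by
  simp only [rescaledBump]
  rw [integral_const_mul, Measure.integral_comp_inv_smul_of_nonneg volume ζ hε.le,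
    finrank_euclideanSpace_fin, smul_eq_mul, inv_mul_cancel_left₀ (by positivity)]

lemma norm_lt_of_rescaledBump_ne_zero {δ : ℝ} (hζ : Function.support ζ ⊆ ball 0 δ)
    (hε : 0 < ε) {y : EuclideanSpace ℝ (Fin d)} (hy : rescaledBump ζ ε y ≠ 0) :
    ‖y‖ < ε * δ := by
  have := hζ (right_ne_zero_of_mul hy)
  rwa [mem_ball_zero_iff, norm_smul, norm_inv, norm_of_nonneg hε.le, inv_mul_lt_iff₀ hε] at this

end RescaledBump

lemma Convex.add_mem_add_smul_of_ball_subset {E : Type*} [NormedAddCommGroup E]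
    [NormedSpace ℝ E] {Ω : Set E} {r s u : ℝ} (hΩ : Convex ℝ Ω) (hball : ball 0 r ⊆ Ω)
    (hs : 0 ≤ s) (hu : 0 < u) {x y : E} (hx : x ∈ s • Ω) (hy : ‖y‖ < u * r) :
    x + y ∈ (s + u) • Ω := by
  rw [hΩ.add_smul hs hu.le]
  refine add_mem_add hx (smul_set_mono hball ?_)
  rwa [_root_.smul_ball hu.ne', smul_zero, mem_ball_zero_iff, norm_of_nonneg hu.le]

section Sandwich

variable {d : ℕ} {Ω : Set (EuclideanSpace ℝ (Fin d))} {ζ : EuclideanSpace ℝ (Fin d) → ℝ}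
  {δ₀ ε t : ℝ}

lemma integral_indicator_smul_sub_le (hconv : Convex ℝ Ω)
    (hball : ball (0 : EuclideanSpace ℝ (Fin d)) (2 * δ₀) ⊆ Ω)
    (hζ : IsNormalizedBump ζ δ₀) (hε : 0 < ε) (ht : 0 ≤ t)
    (x : EuclideanSpace ℝ (Fin d)) :
    ∫ y, (t • Ω).indicator (fun _ => (1 : ℝ)) (x - y) * rescaledBump ζ ε y ≤
      ((t + ε / 2) • Ω).indicator (fun _ => 1) x := by
  refine integral_indicator_sub_mul_le_indicator (rescaledBump_nonneg hζ.nonneg hε.le)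
    ((integral_rescaledBump hε).trans hζ.integral_eq_one) fun y hy hxy => ?_
  have hy' : ‖y‖ < ε / 2 * (2 * δ₀) := by
    linarith [norm_lt_of_rescaledBump_ne_zero hζ.support_subset hε hy]
  simpa using hconv.add_mem_add_smul_of_ball_subset hball ht (half_pos hε) hxy hy'

lemma le_integral_indicator_smul_sub (hconv : Convex ℝ Ω)
    (hball : ball (0 : EuclideanSpace ℝ (Fin d)) (2 * δ₀) ⊆ Ω)
    (hζ : IsNormalizedBump ζ δ₀) (hε : 0 < ε) (ht : ε / 2 ≤ t)
    (x : EuclideanSpace ℝ (Fin d)) :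
    ((t - ε / 2) • Ω).indicator (fun _ => 1) x ≤
      ∫ y, (t • Ω).indicator (fun _ => (1 : ℝ)) (x - y) * rescaledBump ζ ε y := by
  refine indicator_le_integral_indicator_sub_mul (rescaledBump_nonneg hζ.nonneg hε.le)
    ((integral_rescaledBump hε).trans hζ.integral_eq_one) fun y hy hx => ?_
  have hy' : ‖-y‖ < ε / 2 * (2 * δ₀) := by
    rw [norm_neg]
    linarith [norm_lt_of_rescaledBump_ne_zero hζ.support_subset hε hy]
  simpa [sub_eq_add_neg] using
    hconv.add_mem_add_smul_of_ball_subset hball (sub_nonneg.2 ht) (half_pos hε) hx hy'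

lemma summable_integral_indicator_smul_sub (hconv : Convex ℝ Ω)
    (hbdd : Bornology.IsBounded Ω)
    (hball : ball (0 : EuclideanSpace ℝ (Fin d)) (2 * δ₀) ⊆ Ω)
    (hζ : IsNormalizedBump ζ δ₀) (hε : 0 < ε) (ht : 0 ≤ t) :
    Summable fun k : Fin d → ℤ =>
      ∫ y, (t • Ω).indicator (fun _ => (1 : ℝ)) (intVec k - y) * rescaledBump ζ ε y :=
  (summable_indicator_intVec (hbdd.smul₀ (t + ε / 2))).of_nonneg_of_le
    (fun _ => integral_nonneg fun y =>
      mul_nonneg (indicator_nonneg (fun _ _ => zero_le_one) _)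
        (rescaledBump_nonneg hζ.nonneg hε.le y))
    fun _ => integral_indicator_smul_sub_le hconv hball hζ hε ht _

lemma mollifiedCount_le_latticeCount_add (hconv : Convex ℝ Ω)
    (hbdd : Bornology.IsBounded Ω)
    (hball : ball (0 : EuclideanSpace ℝ (Fin d)) (2 * δ₀) ⊆ Ω)
    (hζ : IsNormalizedBump ζ δ₀) (hε : 0 < ε) (ht : 0 ≤ t) :
    mollifiedCount Ω ζ ε t ≤ latticeCount Ω (t + ε / 2) := by
  rw [latticeCount_eq_tsum_indicator]
  exact (summable_integral_indicator_smul_sub hconv hbdd hball hζ hε ht).tsum_le_tsum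
    (fun k => integral_indicator_smul_sub_le hconv hball hζ hε ht _)
    (summable_indicator_intVec (hbdd.smul₀ _))

lemma latticeCount_sub_le_mollifiedCount (hconv : Convex ℝ Ω)
    (hbdd : Bornology.IsBounded Ω)
    (hball : ball (0 : EuclideanSpace ℝ (Fin d)) (2 * δ₀) ⊆ Ω)
    (hζ : IsNormalizedBump ζ δ₀) (hε : 0 < ε) (ht : ε / 2 ≤ t) :
    latticeCount Ω (t - ε / 2) ≤ mollifiedCount Ω ζ ε t := by
  rw [latticeCount_eq_tsum_indicator]
  exact (summable_indicator_intVec (hbdd.smul₀ _)).tsum_le_tsum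
    (fun k => le_integral_indicator_smul_sub hconv hball hζ hε ht _)
    (summable_integral_indicator_smul_sub hconv hbdd hball hζ hε
      ((half_pos hε).le.trans ht))

end Sandwich

section Estimates

lemma le_mul_rpow_of_rpow_neg_mul_le {s e a C : ℝ} (hs : 0 < s) (h : s ^ (-e) * a ≤ C) :
    a ≤ C * s ^ e := by
  rw [rpow_neg hs.le, inv_mul_le_iff₀ (rpow_pos_of_pos hs e)] at h
  rwa [mul_comm]

lemma rpow_le_two_rpow_abs_mul {s t : ℝ} (e : ℝ) (ht : 0 < t) (hs₁ : t / 2 ≤ s)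
    (hs₂ : s ≤ 2 * t) : s ^ e ≤ 2 ^ |e| * t ^ e := by
  rcases le_or_gt 0 e with he | he
  · calc s ^ e ≤ (2 * t) ^ e := rpow_le_rpow (by linarith) hs₂ he
      _ = 2 ^ |e| * t ^ e := by rw [mul_rpow zero_le_two ht.le, abs_of_nonneg he]
  · calc s ^ e ≤ (t / 2) ^ e := rpow_le_rpow_of_nonpos (by positivity) hs₁ he.le
      _ = 2 ^ |e| * t ^ e := by
        rw [div_rpow ht.le zero_le_two, abs_of_neg he, rpow_neg zero_le_two]
        ring

lemma abs_pow_sub_pow_le_of_le_two_mul {s t : ℝ} (n : ℕ) (ht : 0 < t) (hs₀ : 0 ≤ s)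
    (hs : s ≤ 2 * t) : |s ^ n - t ^ n| ≤ n * 2 ^ (n - 1) * t ^ ((n : ℝ) - 1) * |s - t| := by
  have hmax : max |s| |t| ^ (n - 1) ≤ 2 ^ (n - 1) * t ^ (n - 1) := by
    rw [← mul_pow, abs_of_nonneg hs₀, abs_of_pos ht]
    exact pow_le_pow_left₀ (by positivity) (max_le hs (by linarith)) _
  have hcast : (n : ℝ) * t ^ (n - 1) = n * t ^ ((n : ℝ) - 1) := by
    rcases n with _ | n
    · simp
    · rw [Nat.cast_succ, add_sub_cancel_right, rpow_natCast, Nat.add_sub_cancel]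
  calc |s ^ n - t ^ n| ≤ |s - t| * n * max |s| |t| ^ (n - 1) := abs_pow_sub_pow_le s t n
    _ ≤ |s - t| * n * (2 ^ (n - 1) * t ^ (n - 1)) := by gcongr
    _ = 2 ^ (n - 1) * |s - t| * (n * t ^ (n - 1)) := by ring
    _ = n * 2 ^ (n - 1) * t ^ ((n : ℝ) - 1) * |s - t| := by rw [hcast]; ring

lemma abs_latticeCount_sub_le {d : ℕ} {Ω : Set (EuclideanSpace ℝ (Fin d))} {C₁ e s t : ℝ}
    (hE : ∀ s, 0 < s → |latticeErr Ω s| ≤ C₁ * s ^ e) (hC₁ : 0 ≤ C₁) (ht : 0 < t)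
    (hs₁ : t / 2 ≤ s) (hs₂ : s ≤ 2 * t) :
    |latticeCount Ω s - t ^ d * (volume Ω).toReal| ≤
      C₁ * 2 ^ |e| * t ^ e +
        (volume Ω).toReal * d * 2 ^ (d - 1) * t ^ ((d : ℝ) - 1) * |s - t| := by
  set V := (volume Ω).toReal
  have hV : 0 ≤ V := ENNReal.toReal_nonneg
  have hErr : latticeErr Ω s = latticeCount Ω s - s ^ d * V := rfl
  calc |latticeCount Ω s - t ^ d * V| = |latticeErr Ω s + (s ^ d - t ^ d) * V| := by
        rw [hErr]; ring_nf
    _ ≤ |latticeErr Ω s| + |s ^ d - t ^ d| * V :=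
        (abs_add_le _ _).trans_eq (by rw [abs_mul, abs_of_nonneg hV])
    _ ≤ C₁ * (2 ^ |e| * t ^ e) + d * 2 ^ (d - 1) * t ^ ((d : ℝ) - 1) * |s - t| * V := by
        gcongr
        · exact (hE s (by linarith)).trans
            (mul_le_mul_of_nonneg_left (rpow_le_two_rpow_abs_mul e ht hs₁ hs₂) hC₁)
        · exact abs_pow_sub_pow_le_of_le_two_mul d ht (by linarith) hs₂
    _ = _ := by ring

lemma abs_mollifiedErr_le {d : ℕ} {Ω : Set (EuclideanSpace ℝ (Fin d))}
    {ζ : EuclideanSpace ℝ (Fin d) → ℝ} {δ₀ C₁ e ε t : ℝ} (hconv : Convex ℝ Ω)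
    (hbdd : Bornology.IsBounded Ω)
    (hball : ball (0 : EuclideanSpace ℝ (Fin d)) (2 * δ₀) ⊆ Ω)
    (hζ : IsNormalizedBump ζ δ₀) (hE : ∀ s, 0 < s → |latticeErr Ω s| ≤ C₁ * s ^ e)
    (hC₁ : 0 ≤ C₁) (ht : 1 ≤ t) (hε : 0 < ε) (hε₁ : ε ≤ 1) :
    |mollifiedErr Ω ζ ε t| ≤
      C₁ * 2 ^ |e| * t ^ e +
        (volume Ω).toReal * d * 2 ^ (d - 1) * (t ^ ((d : ℝ) - 1) * ε) := by
  have hB : 0 ≤ (volume Ω).toReal * d * 2 ^ (d - 1) := by positivity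
  have htd : 0 ≤ t ^ ((d : ℝ) - 1) := rpow_nonneg (zero_le_one.trans ht) _
  have hbound : ∀ s, |s - t| = ε / 2 → |latticeCount Ω s - t ^ d * (volume Ω).toReal| ≤
      C₁ * 2 ^ |e| * t ^ e + (volume Ω).toReal * d * 2 ^ (d - 1) * (t ^ ((d : ℝ) - 1) * ε) :=
    fun s hs => by
      obtain ⟨hs₁, hs₂⟩ := abs_le.1 hs.le
      refine (abs_latticeCount_sub_le hE hC₁ (by linarith) (by linarith) (by linarith)).trans ?_
      rw [hs, ← mul_assoc _ _ ε]
      gcongr _ + ?_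
      exact mul_le_mul_of_nonneg_left (half_le_self hε.le) (mul_nonneg hB htd)
  have hlow := latticeCount_sub_le_mollifiedCount hconv hbdd hball hζ hε (t := t) (by linarith)
  have hup := mollifiedCount_le_latticeCount_add hconv hbdd hball hζ hε (t := t) (by linarith)
  calc |mollifiedErr Ω ζ ε t|
      ≤ max |latticeCount Ω (t - ε / 2) - t ^ d * (volume Ω).toReal|
          |latticeCount Ω (t + ε / 2) - t ^ d * (volume Ω).toReal| :=
        abs_le_max_abs_abs (sub_le_sub_right hlow _) (sub_le_sub_right hup _)
    _ ≤ _ := max_le (hbound _ (by rw [sub_sub_cancel_left, abs_neg, abs_of_pos (half_pos hε)]))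
          (hbound _ (by rw [add_sub_cancel_left, abs_of_pos (half_pos hε)]))

end Estimates

theorem mollified_remainder_pointwise_bound_general {d : ℕ}
    (Ω : Set (EuclideanSpace ℝ (Fin d)))
    (hconv : Convex ℝ Ω) (hbdd : Bornology.IsBounded Ω)
    (δ₀ : ℝ) (hball : Metric.ball (0 : EuclideanSpace ℝ (Fin d)) (2 * δ₀) ⊆ Ω)
    (ζ : EuclideanSpace ℝ (Fin d) → ℝ)
    (hζpos : ∀ x, 0 ≤ ζ x)
    (hζsupp : Function.support ζ ⊆ Metric.ball 0 δ₀)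
    (hζint : ∫ x : EuclideanSpace ℝ (Fin d), ζ x = 1)
    (μ : ℝ) (C₁ : ℝ)
    (hE : ∀ t : ℝ, 0 < t → t ^ (-((d : ℝ) - 1 - μ)) * |latticeErr Ω t| ≤ C₁) :
    ∃ C : ℝ, 0 < C ∧ ∀ t : ℝ, 1 ≤ t → ∀ ε : ℝ, 0 < ε → ε ≤ 1 →
      |mollifiedErr Ω ζ ε t| ≤ C * max (t ^ ((d : ℝ) - 1 - μ)) (t ^ ((d : ℝ) - 1) * ε) := by
  set e := (d : ℝ) - 1 - μ
  have hE' : ∀ s, 0 < s → |latticeErr Ω s| ≤ C₁ * s ^ e := fun s hs =>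
    le_mul_rpow_of_rpow_neg_mul_le hs (hE s hs)
  have hC₁ : 0 ≤ C₁ := by
    have h₁ := hE 1 one_pos
    rw [one_rpow, one_mul] at h₁
    exact (abs_nonneg _).trans h₁
  have hA : 0 ≤ C₁ * 2 ^ |e| := by positivity
  have hB : 0 ≤ (volume Ω).toReal * d * 2 ^ (d - 1) := by positivity
  refine ⟨C₁ * 2 ^ |e| + (volume Ω).toReal * d * 2 ^ (d - 1) + 1, by positivity,
    fun t ht ε hε hε₁ => ?_⟩
  have hmax₁ : t ^ e ≤ max (t ^ e) (t ^ ((d : ℝ) - 1) * ε) := le_max_left _ _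
  have hmax₂ : t ^ ((d : ℝ) - 1) * ε ≤ max (t ^ e) (t ^ ((d : ℝ) - 1) * ε) :=
    le_max_right _ _
  have hmax₀ : 0 ≤ t ^ e := rpow_nonneg (zero_le_one.trans ht) e
  refine (abs_mollifiedErr_le hconv hbdd hball ⟨hζpos, hζsupp, hζint⟩ hE' hC₁ ht hε
    hε₁).trans ?_
  linarith [mul_le_mul_of_nonneg_left hmax₁ hA, mul_le_mul_of_nonneg_left hmax₂ hB]

theorem mollified_remainder_pointwise_bound {d : ℕ}
    (Ω : Set (EuclideanSpace ℝ (Fin d)))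
    (hconv : Convex ℝ Ω) (hopen : IsOpen Ω) (hbdd : Bornology.IsBounded Ω)
    (h0 : 0 ∈ interior Ω) (hC1 : C1Boundary Ω)
    (δ₀ : ℝ) (hδ₀ : 0 < δ₀) (hball : Metric.ball (0 : EuclideanSpace ℝ (Fin d)) (2 * δ₀) ⊆ Ω)
    (ζ : EuclideanSpace ℝ (Fin d) → ℝ) (hζsm : ContDiff ℝ (⊤ : ℕ∞) ζ)
    (hζpos : ∀ x, 0 ≤ ζ x)
    (hζsupp : Function.support ζ ⊆ Metric.ball 0 δ₀)
    (hζrad : ∀ x y : EuclideanSpace ℝ (Fin d), ‖x‖ = ‖y‖ → ζ x = ζ y)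
    (hζint : ∫ x : EuclideanSpace ℝ (Fin d), ζ x = 1)
    (μ : ℝ) (hμ0 : 0 ≤ μ) (hμ1 : μ ≤ 1) (C₁ : ℝ)
    (hE : ∀ t : ℝ, 0 < t → t ^ (-((d : ℝ) - 1 - μ)) * |latticeErr Ω t| ≤ C₁) :
    ∃ C : ℝ, 0 < C ∧ ∀ t : ℝ, 1 ≤ t → ∀ ε : ℝ, 0 < ε → ε ≤ 1 →
      |mollifiedErr Ω ζ ε t| ≤ C * max (t ^ ((d : ℝ) - 1 - μ)) (t ^ ((d : ℝ) - 1) * ε) :=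
  mollified_remainder_pointwise_bound_general Ω hconv hbdd δ₀ hball ζ hζpos hζsupp hζint μ C₁ hE
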